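/- arXiv:2205.09955 — 5 statements merged into one kernel-verified Lean document; each statement's English description precedes it below -/
import Mathlib

section
/- Let G be a connected simple graph, let D be an orientation of G, and let a ≥ 1 be a real number. Then R⁰_{a+1}(D) ≤ R⁰_{a+1}(G)/2, with equality if and only if D is a sink-source orientation of G. -/
/-!
Counting the arcs of `D` by their tails and by their heads gives
`R⁰_{a+1}(D) = ½ ∑_v (d⁺(v)^(a+1) + d⁻(v)^(a+1))`, while `d_G(v) = d⁺(v) + d⁻(v)` gives
`R⁰_{a+1}(G)/2 = ½ ∑_v (d⁺(v) + d⁻(v))^(a+1)`. For `p = a + 1 > 1` the map `t ↦ t^p` is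
strictly superadditive on positive reals, so the comparison holds vertex by vertex, with
equality exactly at vertices where one of the two degrees vanishes.
-/

/-- An orientation of a simple graph `G`: each edge `{u,v}` is replaced by exactly one
of the arcs `(u,v)` or `(v,u)`. -/
structure SimpleGraph.Orientation {V : Type*} (G : SimpleGraph V) where
  /-- the arc relation of the orientation -/
  arc : V → V → Prop
  adj_of_arc : ∀ u v, arc u v → G.Adj u v
  arc_total : ∀ u v, G.Adj u v → arc u v ∨ arc v u
  arc_asymm : ∀ u v, arc u v → ¬ arc v u

namespace SimpleGraph.Orientation

variable {V : Type*} {G : SimpleGraph V} (D : G.Orientation)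

/-- The out-degree of a vertex in the orientation. -/
noncomputable def outDeg (u : V) : ℕ := Set.ncard {v | D.arc u v}

/-- The in-degree of a vertex in the orientation. -/
noncomputable def inDeg (v : V) : ℕ := Set.ncard {u | D.arc u v}

/-- An orientation is sink-source if every vertex has out-degree 0 or in-degree 0. -/
def IsSinkSource : Prop := ∀ v : V, D.outDeg v = 0 ∨ D.inDeg v = 0

open scoped Classical in
/-- The zeroth-order general Randić index `R⁰_{a+1}(D)` of an orientation:
`(1/2) ∑_{(u,v) arc} ((d⁺ u)^a + (d⁻ v)^a)`. -/
noncomputable def randic [Fintype V] (a : ℝ) : ℝ :=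
  (1 / 2) * ∑ p ∈ Finset.univ.filter (fun p : V × V => D.arc p.1 p.2),
    ((D.outDeg p.1 : ℝ) ^ a + (D.inDeg p.2 : ℝ) ^ a)

end SimpleGraph.Orientation

/-- The zeroth-order general Randić index `R⁰_{a+1}(G) = ∑_v d_G(v)^(a+1)` of a graph. -/
noncomputable def SimpleGraph.randic {V : Type*} [Fintype V] (G : SimpleGraph V) (a : ℝ) : ℝ :=
  ∑ v : V, ((G.neighborSet v).ncard : ℝ) ^ (a + 1)

namespace Real

theorem rpow_add_rpow_lt_add_rpow {x y p : ℝ} (hx : 0 < x) (hy : 0 < y) (hp : 1 < p) :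
    x ^ p + y ^ p < (x + y) ^ p := by
  obtain ⟨q, hq, rfl⟩ : ∃ q, 0 < q ∧ p = q + 1 := ⟨p - 1, by linarith, by ring⟩
  have hxq : x ^ q < (x + y) ^ q := rpow_lt_rpow hx.le (by linarith) hq
  have hyq : y ^ q < (x + y) ^ q := rpow_lt_rpow hy.le (by linarith) hq
  rw [rpow_add_one hx.ne', rpow_add_one hy.ne', rpow_add_one (by positivity)]
  nlinarith

theorem rpow_add_rpow_eq_add_rpow_iff {x y p : ℝ} (hx : 0 ≤ x) (hy : 0 ≤ y) (hp : 1 < p) :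
    x ^ p + y ^ p = (x + y) ^ p ↔ x = 0 ∨ y = 0 := by
  refine ⟨fun h => ?_, ?_⟩
  · by_contra! hxy
    exact (rpow_add_rpow_lt_add_rpow (hx.lt_of_ne' hxy.1) (hy.lt_of_ne' hxy.2) hp).ne h
  · rintro (rfl | rfl) <;> simp [zero_rpow (by linarith : p ≠ 0)]

end Real

namespace SimpleGraph.Orientation

variable {V : Type*} {G : SimpleGraph V} (D : G.Orientation)

theorem outDeg_add_inDeg [Finite V] (v : V) :
    D.outDeg v + D.inDeg v = (G.neighborSet v).ncard := by
  have hsplit : G.neighborSet v = {u | D.arc v u} ∪ {u | D.arc u v} := by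
    ext u
    exact ⟨D.arc_total v u,
      fun h => h.elim (D.adj_of_arc v u) fun h => (D.adj_of_arc u v h).symm⟩
  have hdisj : Disjoint {u | D.arc v u} {u | D.arc u v} :=
    Set.disjoint_left.mpr fun u => D.arc_asymm v u
  rw [hsplit, Set.ncard_union_eq hdisj (Set.toFinite _) (Set.toFinite _), outDeg, inDeg]

open scoped Classical in
theorem sum_arcs_fst [Fintype V] {M : Type*} [AddCommMonoid M] (f : V → M) :
    ∑ p ∈ Finset.univ.filter (fun p : V × V => D.arc p.1 p.2), f p.1 =
      ∑ u, D.outDeg u • f u := by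
  rw [Finset.sum_filter, Fintype.sum_prod_type]
  refine Finset.sum_congr rfl fun u _ => ?_
  dsimp only
  rw [← Finset.sum_filter, Finset.sum_const, outDeg, Set.ncard_eq_toFinset_card',
    Set.toFinset_ofPred]

open scoped Classical in
theorem sum_arcs_snd [Fintype V] {M : Type*} [AddCommMonoid M] (f : V → M) :
    ∑ p ∈ Finset.univ.filter (fun p : V × V => D.arc p.1 p.2), f p.2 =
      ∑ v, D.inDeg v • f v := by
  rw [Finset.sum_filter, Fintype.sum_prod_type_right]
  refine Finset.sum_congr rfl fun v _ => ?_
  dsimp only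
  rw [← Finset.sum_filter, Finset.sum_const, inDeg, Set.ncard_eq_toFinset_card',
    Set.toFinset_ofPred]

/-- `n * n ^ a = n ^ (a + 1)` holds also for `n = 0`, as long as `a + 1 ≠ 0`. -/
theorem randic_eq_half_sum_rpow [Fintype V] {a : ℝ} (ha : a + 1 ≠ 0) :
    D.randic a =
      1 / 2 * ∑ v, ((D.outDeg v : ℝ) ^ (a + 1) + (D.inDeg v : ℝ) ^ (a + 1)) := by
  have hpow (n : ℕ) : n • (n : ℝ) ^ a = (n : ℝ) ^ (a + 1) := by
    rw [nsmul_eq_mul, Real.rpow_add_one' n.cast_nonneg ha, mul_comm]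
  rw [randic, Finset.sum_add_distrib, Finset.sum_add_distrib,
    D.sum_arcs_fst fun u => (D.outDeg u : ℝ) ^ a, D.sum_arcs_snd fun v => (D.inDeg v : ℝ) ^ a]
  simp only [hpow]

end SimpleGraph.Orientation

theorem orientation_randic_le_half_graph_randic_general
    {V : Type*} [Fintype V] (G : SimpleGraph V)
    (D : G.Orientation) (a : ℝ) (ha : 1 ≤ a) :
    D.randic a ≤ G.randic a / 2 ∧ (D.randic a = G.randic a / 2 ↔ D.IsSinkSource) := by
  set f : V → ℝ := fun v => (D.outDeg v : ℝ) ^ (a + 1) + (D.inDeg v : ℝ) ^ (a + 1)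
  set g : V → ℝ := fun v => ((D.outDeg v : ℝ) + D.inDeg v) ^ (a + 1)
  have hD : D.randic a = 1 / 2 * ∑ v, f v := D.randic_eq_half_sum_rpow (by linarith)
  have hG : G.randic a / 2 = 1 / 2 * ∑ v, g v := by
    simp only [SimpleGraph.randic, g, ← D.outDeg_add_inDeg, Nat.cast_add]
    ring
  have hfg (v : V) : f v ≤ g v :=
    Real.add_rpow_le_rpow_add (Nat.cast_nonneg _) (Nat.cast_nonneg _) (by linarith)
  have hsum : ∑ v, f v ≤ ∑ v, g v := Finset.sum_le_sum fun v _ => hfg v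
  refine ⟨by rw [hD, hG]; linarith, ?_⟩
  rw [hD, hG, mul_right_inj' (by norm_num), Finset.sum_eq_sum_iff_of_le fun v _ => hfg v]
  simp only [Finset.mem_univ, true_implies, f, g, SimpleGraph.Orientation.IsSinkSource]
  refine forall_congr' fun v => ?_
  rw [Real.rpow_add_rpow_eq_add_rpow_iff (Nat.cast_nonneg _) (Nat.cast_nonneg _) (by linarith)]
  norm_cast

/-- For a connected simple graph `G`, any orientation `D` of `G` and any
real `a ≥ 1`, one has `R⁰_{a+1}(D) ≤ R⁰_{a+1}(G)/2`, with equality iff `D` is a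
sink-source orientation of `G`. -/
theorem orientation_randic_le_half_graph_randic
    {V : Type*} [Fintype V] (G : SimpleGraph V) (hconn : G.Connected)
    (D : G.Orientation) (a : ℝ) (ha : 1 ≤ a) :
    D.randic a ≤ G.randic a / 2 ∧ (D.randic a = G.randic a / 2 ↔ D.IsSinkSource) :=
  orientation_randic_le_half_graph_randic_general G D a ha
end

section
/- Let G be a tree with n ≥ 2 vertices and let a ≥ 1 be a real number. Then R⁰_{a+1}(G) ≤ n − 1 + (n−1)^{1+a}, with equality if and only if G is the star K_{1,n−1}. -/
/-- `G` is a star: there is a center adjacent to exactly the other vertices, which are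
pairwise non-adjacent. -/
def SimpleGraph.IsStar {V : Type*} (G : SimpleGraph V) : Prop :=
  ∃ c : V, ∀ x y : V, G.Adj x y ↔ ((x = c ∧ y ≠ c) ∨ (y = c ∧ x ≠ c))

open Finset Set

section Secant

variable {𝕜 ι : Type*} [Field 𝕜]

theorem add_sub_mul_slope (f : 𝕜 → 𝕜) (x z : 𝕜) : f x + (z - x) * slope f x z = f z := by
  rw [← smul_eq_mul, sub_smul_slope, vsub_eq_sub, add_sub_cancel]

theorem sum_secant_of_sum_sub_eq (f : 𝕜 → 𝕜) {x z : 𝕜} {t : Finset ι} {y : ι → 𝕜}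
    (hsum : ∑ i ∈ t, (y i - x) = z - x) :
    ∑ i ∈ t, (f x + (y i - x) * slope f x z) = (#t - 1) * f x + f z := by
  rw [sum_add_distrib, sum_const, ← sum_mul, hsum, nsmul_eq_mul, ← add_sub_mul_slope f x z]
  ring

variable [LinearOrder 𝕜] [IsStrictOrderedRing 𝕜] {s : Set 𝕜} {f : 𝕜 → 𝕜} {x y z : 𝕜}

theorem ConvexOn.le_secant (hf : ConvexOn 𝕜 s f) (hx : x ∈ s) (hz : z ∈ s) (hxy : x ≤ y)
    (hyz : y ≤ z) : f y ≤ f x + (y - x) * slope f x z := by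
  rcases hxy.eq_or_lt with rfl | hxy
  · simp
  rcases hyz.eq_or_lt with rfl | hyz
  · rw [add_sub_mul_slope]
  rw [slope_def_field, ← mul_div_assoc, ← sub_le_iff_le_add', le_div_iff₀ (by linarith)]
  linarith [hf.secant_mono_aux1 hx hz hxy hyz]

theorem StrictConvexOn.lt_secant (hf : StrictConvexOn 𝕜 s f) (hx : x ∈ s) (hz : z ∈ s)
    (hxy : x < y) (hyz : y < z) : f y < f x + (y - x) * slope f x z := by
  rw [slope_def_field, ← mul_div_assoc, ← sub_lt_iff_lt_add', lt_div_iff₀ (by linarith)]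
  linarith [hf.secant_strict_mono_aux1 hx hz hxy hyz]

theorem StrictConvexOn.eq_secant_iff (hf : StrictConvexOn 𝕜 s f) (hx : x ∈ s) (hz : z ∈ s)
    (hxy : x ≤ y) (hyz : y ≤ z) : f y = f x + (y - x) * slope f x z ↔ y = x ∨ y = z := by
  refine ⟨fun h => ?_, ?_⟩
  · by_contra! hne
    exact (hf.lt_secant hx hz (hxy.lt_of_ne' hne.1) (hyz.lt_of_ne hne.2)).ne h
  · rintro (rfl | rfl)
    · simp
    · rw [add_sub_mul_slope]

theorem ConvexOn.sum_le_of_sum_sub_eq (hf : ConvexOn 𝕜 s f) (hx : x ∈ s) (hz : z ∈ s)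
    {t : Finset ι} {y : ι → 𝕜} (hy : ∀ i ∈ t, y i ∈ Icc x z)
    (hsum : ∑ i ∈ t, (y i - x) = z - x) : ∑ i ∈ t, f (y i) ≤ (#t - 1) * f x + f z := by
  rw [← sum_secant_of_sum_sub_eq f hsum]
  exact sum_le_sum fun i hi => hf.le_secant hx hz (hy i hi).1 (hy i hi).2

theorem StrictConvexOn.sum_eq_iff_of_sum_sub_eq (hf : StrictConvexOn 𝕜 s f) (hx : x ∈ s)
    (hz : z ∈ s) {t : Finset ι} {y : ι → 𝕜} (hy : ∀ i ∈ t, y i ∈ Icc x z)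
    (hsum : ∑ i ∈ t, (y i - x) = z - x) :
    ∑ i ∈ t, f (y i) = (#t - 1) * f x + f z ↔ ∀ i ∈ t, y i = x ∨ y i = z := by
  rw [← sum_secant_of_sum_sub_eq f hsum,
    sum_eq_sum_iff_of_le fun i hi => hf.convexOn.le_secant hx hz (hy i hi).1 (hy i hi).2]
  exact forall₂_congr fun i hi => hf.eq_secant_iff hx hz (hy i hi).1 (hy i hi).2

end Secant

namespace SimpleGraph

variable {V : Type*} [Fintype V] {G : SimpleGraph V} [DecidableRel G.Adj]

theorem randic_eq_sum_degree (a : ℝ) : G.randic a = ∑ v, (G.degree v : ℝ) ^ (a + 1) := by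
  simp only [randic, ← card_neighborSet_eq_degree, ← Nat.card_eq_fintype_card,
    Nat.card_coe_set_eq]

theorem IsTree.sum_degrees (hG : G.IsTree) : ∑ v, G.degree v = 2 * (Fintype.card V - 1) := by
  rw [sum_degrees_eq_twice_card_edges, ← hG.card_edgeFinset, Nat.add_sub_cancel]

theorem IsStar.degree_eq_one_or (hG : G.IsStar) (v : V) :
    G.degree v = 1 ∨ G.degree v = Fintype.card V - 1 := by
  classical
  obtain ⟨c, hc⟩ := hG
  by_cases hv : v = c
  · subst hv
    exact Or.inr <| (G.degree_eq_card_sub_one v).2 fun w hw =>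
      (hc v w).2 (Or.inl ⟨rfl, hw.symm⟩)
  · rw [← card_neighborFinset_eq_degree, card_eq_one]
    exact Or.inl ⟨c, by ext x; simp [hc, hv]⟩

/-- All `card V - 1` edges of the tree are incident to `c`. -/
theorem IsTree.isStar_of_isUniversal (hG : G.IsTree) {c : V} (hc : G.IsUniversal c) :
    G.IsStar := by
  classical
  have hinc : G.incidenceFinset c = G.edgeFinset := by
    refine eq_of_subset_of_card_le (G.incidenceFinset_subset c) ?_
    rw [card_incidenceFinset_eq_degree, (G.degree_eq_card_sub_one c).2 hc, ← hG.card_edgeFinset,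
      Nat.add_sub_cancel]
  refine ⟨c, fun x y => ⟨fun h => ?_, ?_⟩⟩
  · have hcxy : c ∈ s(x, y) := by
      have hxy : s(x, y) ∈ G.edgeFinset := mem_edgeFinset.2 h
      rw [← hinc, mem_incidenceFinset] at hxy
      exact hxy.2
    rcases Sym2.mem_iff.1 hcxy with rfl | rfl
    · exact Or.inl ⟨rfl, h.ne.symm⟩
    · exact Or.inr ⟨rfl, h.ne⟩
  · rintro (⟨rfl, hy⟩ | ⟨rfl, hx⟩)
    · exact hc hy.symm
    · exact (hc hx.symm).symm

theorem IsTree.isStar_iff_forall_degree (hG : G.IsTree) :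
    G.IsStar ↔ ∀ v, G.degree v = 1 ∨ G.degree v = Fintype.card V - 1 := by
  refine ⟨IsStar.degree_eq_one_or, fun h => ?_⟩
  obtain ⟨c, hc⟩ : ∃ c, G.degree c = Fintype.card V - 1 := by
    -- otherwise all degrees are `1`, the degree sum forces `card V = 2`, and then `1 = card V - 1`
    by_contra! hno
    have hleaf v : G.degree v = 1 := (h v).resolve_right (hno v)
    have hsum := hG.sum_degrees
    simp only [hleaf, sum_const, card_univ, smul_eq_mul, mul_one] at hsum
    obtain ⟨v⟩ := hG.connected.nonempty
    have := Fintype.card_pos_iff.2 ⟨v⟩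
    exact hno v (by rw [hleaf]; omega)
  exact hG.isStar_of_isUniversal ((G.degree_eq_card_sub_one c).1 hc)

end SimpleGraph

/-- a tree on `n ≥ 2` vertices satisfies
`R⁰_{a+1}(G) ≤ n - 1 + (n-1)^(1+a)`, with equality iff `G` is the star `K_{1,n-1}`. -/
theorem tree_randic_le {V : Type*} [Fintype V] (G : SimpleGraph V) (n : ℕ)
    (hn : Fintype.card V = n) (hn2 : 2 ≤ n) (htree : G.IsTree) (a : ℝ) (ha : 1 ≤ a) :
    G.randic a ≤ (n : ℝ) - 1 + ((n : ℝ) - 1) ^ (1 + a) ∧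
    (G.randic a = (n : ℝ) - 1 + ((n : ℝ) - 1) ^ (1 + a) ↔ G.IsStar) := by
  classical
  have : Nontrivial V := Fintype.one_lt_card_iff_nontrivial.mp (by omega)
  have hf : StrictConvexOn ℝ (Ici 0) fun t : ℝ => t ^ (a + 1) :=
    strictConvexOn_rpow (by linarith)
  have hdeg : ∀ v ∈ Finset.univ, (G.degree v : ℝ) ∈ Icc 1 ((n - 1 : ℕ) : ℝ) := fun v _ =>
    ⟨mod_cast htree.connected.preconnected.degree_pos_of_nontrivial v,
      mod_cast (by have := G.degree_lt_card_verts v; omega)⟩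
  have hsum : ∑ v, ((G.degree v : ℝ) - 1) = ((n - 1 : ℕ) : ℝ) - 1 := by
    rw [sum_sub_distrib, ← Nat.cast_sum, htree.sum_degrees, hn, sum_const, card_univ, hn]
    push_cast [Nat.cast_pred (by omega : 0 < n)]
    ring
  have hrhs : ((#(univ : Finset V) : ℝ) - 1) * (1 : ℝ) ^ (a + 1) +
      ((n - 1 : ℕ) : ℝ) ^ (a + 1) = n - 1 + (n - 1) ^ (1 + a) := by
    rw [card_univ, hn, Real.one_rpow, mul_one, Nat.cast_pred (by omega), add_comm a]
  rw [G.randic_eq_sum_degree, ← hrhs, hf.sum_eq_iff_of_sum_sub_eq (by simp) (by simp) hdeg hsum,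
    htree.isStar_iff_forall_degree, hn]
  refine ⟨hf.convexOn.sum_le_of_sum_sub_eq (by simp) (by simp) hdeg hsum, ?_⟩
  simp only [Finset.mem_univ, true_imp_iff, Nat.cast_eq_one, Nat.cast_inj]
end

section
/- For every real a ≥ 1 and every real d ≥ 3, one has 2^{a+1} + (d−1)^{a+1} − d^{a+1} − 1 < 0. -/
/-! With `p = a + 1 ≥ 2` and `x = d - 1 ≥ 2`, Bernoulli's inequality in homogeneous form gives
`x ^ p + p x ^ (p - 1) ≤ (x + 1) ^ p`, and the tangent term already dominates `2 ^ p`, since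
`p x ^ (p - 1) ≥ 2 · 2 ^ (p - 1)`. Hence `2 ^ p + x ^ p ≤ (x + 1) ^ p < (x + 1) ^ p + 1`. -/

open Real

theorem Real.rpow_add_mul_rpow_sub_one_mul_le_rpow_add {x h p : ℝ} (hx : 0 < x) (hh : -x ≤ h)
    (hp : 1 ≤ p) : x ^ p + p * x ^ (p - 1) * h ≤ (x + h) ^ p := by
  have hs : -1 ≤ h / x := by rwa [le_div_iff₀ hx, neg_one_mul]
  calc x ^ p + p * x ^ (p - 1) * h = x ^ p * (1 + p * (h / x)) := by
        rw [rpow_sub hx, rpow_one]; field_simp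
    _ ≤ x ^ p * (1 + h / x) ^ p :=
        mul_le_mul_of_nonneg_left (one_add_mul_self_le_rpow_one_add hs hp) (by positivity)
    _ = (x + h) ^ p := by
        rw [← mul_rpow hx.le (by linarith), mul_one_add, mul_div_cancel₀ h hx.ne']

theorem Real.two_rpow_le_mul_rpow_sub_one {x p : ℝ} (hx : 2 ≤ x) (hp : 2 ≤ p) :
    (2 : ℝ) ^ p ≤ p * x ^ (p - 1) :=
  calc (2 : ℝ) ^ p = 2 * 2 ^ (p - 1) := by
        rw [← rpow_one_add' zero_le_two (by linarith)]; ring_nf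
    _ ≤ p * x ^ (p - 1) := by
        gcongr
        linarith

/-- for all reals `a ≥ 1` and `d ≥ 3`,
`2^(a+1) + (d-1)^(a+1) - d^(a+1) - 1 < 0`. -/
theorem rpow_diff_neg' (a d : ℝ) (ha : 1 ≤ a) (hd : 3 ≤ d) :
    (2 : ℝ) ^ (a + 1) + (d - 1) ^ (a + 1) - d ^ (a + 1) - 1 < 0 := by
  have hbern := rpow_add_mul_rpow_sub_one_mul_le_rpow_add (x := d - 1) (h := 1) (p := a + 1)
    (by linarith) (by linarith) (by linarith)
  have htangent := two_rpow_le_mul_rpow_sub_one (x := d - 1) (p := a + 1) (by linarith) (by linarith)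
  rw [sub_add_cancel, mul_one] at hbern
  linarith
end

section
/- For every real a ≥ 1, one has 5^{a+1} + 3^{a+1} + 2 ≥ 2·4^{a+1} + 2^{a+1}, with equality if and only if a = 1. -/
/-!
Write `a + 1 = (a - 1) + 2` and `s = a - 1 ≥ 0`; the inequality becomes
`32·4^s + 4·2^s ≤ 25·5^s + 9·3^s + 2`. Since `4^32 ≤ 5^25·3^5`, weighted AM-GM with weights
`25/32, 5/32, 2/32` applied to `5^s, 3^s, 1` gives `32·4^s ≤ 25·5^s + 5·3^s + 2`, and
`2^s ≤ 3^s` covers the rest; the latter is strict for `s > 0`, which gives the equality case.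
-/

namespace Real

theorem geom_mean_rpow_le_arith_mean3_weighted {w₁ w₂ w₃ x y z : ℝ} (s : ℝ)
    (hw₁ : 0 ≤ w₁) (hw₂ : 0 ≤ w₂) (hw₃ : 0 ≤ w₃) (hx : 0 ≤ x) (hy : 0 ≤ y) (hz : 0 ≤ z)
    (hw : w₁ + w₂ + w₃ = 1) :
    (x ^ w₁ * y ^ w₂ * z ^ w₃) ^ s ≤ w₁ * x ^ s + w₂ * y ^ s + w₃ * z ^ s := by
  have hswap : ∀ {t : ℝ} (w : ℝ), 0 ≤ t → (t ^ w) ^ s = (t ^ s) ^ w := fun w ht => by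
    rw [← rpow_mul ht, ← rpow_mul ht, mul_comm]
  rw [mul_rpow (by positivity) (by positivity), mul_rpow (by positivity) (by positivity),
    hswap w₁ hx, hswap w₂ hy, hswap w₃ hz]
  exact geom_mean_le_arith_mean3_weighted hw₁ hw₂ hw₃
    (rpow_nonneg hx s) (rpow_nonneg hy s) (rpow_nonneg hz s) hw

theorem four_le_geom_mean_five_three_one :
    (4 : ℝ) ≤ 5 ^ (25 / 32 : ℝ) * 3 ^ (5 / 32 : ℝ) * 1 ^ (2 / 32 : ℝ) := by
  have hpow : ∀ {x : ℝ} (n : ℕ), 0 ≤ x → (x ^ ((n : ℝ) / 32)) ^ 32 = x ^ n := fun n hx => by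
    rw [← rpow_mul_natCast hx, ← rpow_natCast]
    norm_num
  refine le_of_pow_le_pow_left₀ (n := 32) (by norm_num) (by positivity) ?_
  rw [mul_pow, mul_pow]
  have h₅ := hpow 25 (x := 5) (by norm_num)
  have h₃ := hpow 5 (x := 3) (by norm_num)
  push_cast at h₅ h₃
  rw [h₅, h₃, one_rpow]
  norm_num

theorem thirtytwo_mul_four_rpow_le {s : ℝ} (hs : 0 ≤ s) :
    32 * (4 : ℝ) ^ s ≤ 25 * 5 ^ s + 5 * 3 ^ s + 2 := by
  have hamgm := geom_mean_rpow_le_arith_mean3_weighted s (by norm_num : (0 : ℝ) ≤ 25 / 32)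
    (by norm_num : (0 : ℝ) ≤ 5 / 32) (by norm_num : (0 : ℝ) ≤ 2 / 32)
    (by norm_num : (0 : ℝ) ≤ 5) (by norm_num : (0 : ℝ) ≤ 3) zero_le_one (by norm_num)
  have h4 := rpow_le_rpow (by norm_num) four_le_geom_mean_five_three_one hs
  simp only [one_rpow, mul_one] at hamgm h4
  linarith

end Real

open Real in
/-- for every real `a ≥ 1`,
`5^(a+1) + 3^(a+1) + 2 ≥ 2·4^(a+1) + 2^(a+1)`, with equality iff `a = 1`. -/
theorem rpow_ineq_16 (a : ℝ) (ha : 1 ≤ a) :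
    (5 : ℝ) ^ (a + 1) + (3 : ℝ) ^ (a + 1) + 2 ≥ 2 * (4 : ℝ) ^ (a + 1) + (2 : ℝ) ^ (a + 1) ∧
    ((5 : ℝ) ^ (a + 1) + (3 : ℝ) ^ (a + 1) + 2 = 2 * (4 : ℝ) ^ (a + 1) + (2 : ℝ) ^ (a + 1) ↔
      a = 1) := by
  have hsplit : ∀ x : ℝ, 0 < x → x ^ (a + 1) = x ^ (a - 1) * x ^ 2 := fun x hx => by
    rw [← rpow_add_natCast hx.ne']
    congr 1
    push_cast
    ring
  have hs : 0 ≤ a - 1 := by linarith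
  rw [hsplit 5 (by norm_num), hsplit 3 (by norm_num), hsplit 4 (by norm_num),
    hsplit 2 (by norm_num)]
  have h4 := thirtytwo_mul_four_rpow_le hs
  have h23 : (2 : ℝ) ^ (a - 1) ≤ 3 ^ (a - 1) := rpow_le_rpow (by norm_num) (by norm_num) hs
  refine ⟨by linarith, fun heq => ?_, fun h => by norm_num [h]⟩
  by_contra hne
  have h23' : (2 : ℝ) ^ (a - 1) < 3 ^ (a - 1) :=
    rpow_lt_rpow (by norm_num) (by norm_num) (by contrapose! hne; linarith)
  linarith
end

section
/- Let a ≥ 1 and d ≥ 2 be real numbers. For every real x with 1 ≤ x ≤ d−1, one has x^{a+1} − (x−1)^{a+1} + (d−x)^{a+1} − (d−x−1)^{a+1} ≤ 1 + (d−1)^{a+1} − (d−2)^{a+1}; that is, the function f(x) = x^{a+1} − (x−1)^{a+1} + (d−x)^{a+1} − (d−x−1)^{a+1} on [1, d−1] attains its maximum at the endpoints x = 1 and x = d−1. -/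
/-!
With `p = a + 1 ≥ 2`, the function `g x = x ^ p - (x - 1) ^ p` is convex on `[1, ∞)`: its derivative
`p (x ^ (p - 1) - (x - 1) ^ (p - 1))` is an increment of the convex function `t ↦ t ^ (p - 1)`, hence
monotone. The left-hand side is `g x + g (d - x)`, and for a convex function a sum `g x + g y` with
`x + y` fixed and `x, y ∈ [1, d - 1]` is largest at the endpoints.
-/

open Set

section LinearOrderedField

variable {𝕜 : Type*} [Field 𝕜] [LinearOrder 𝕜] [IsStrictOrderedRing 𝕜] {s : Set 𝕜} {f : 𝕜 → 𝕜}

theorem ConvexOn.map_add_map_add_sub_le (hf : ConvexOn 𝕜 s f) {a b x : 𝕜} (ha : a ∈ s) (hb : b ∈ s)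
    (hx : x ∈ Icc a b) : f x + f (a + b - x) ≤ f a + f b := by
  obtain ⟨hax, hxb⟩ := hx
  rcases (hax.trans hxb).eq_or_lt with rfl | hab
  · obtain rfl : x = a := le_antisymm hxb hax
    simp
  have hba : 0 < b - a := sub_pos.mpr hab
  set θ := (b - x) / (b - a) with hθ
  have hθ0 : 0 ≤ θ := div_nonneg (sub_nonneg.mpr hxb) hba.le
  have hθ1 : 0 ≤ 1 - θ := by
    rw [hθ, one_sub_div hba.ne']
    exact div_nonneg (by linarith) hba.le
  have hx : θ • a + (1 - θ) • b = x := by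
    simp only [smul_eq_mul, hθ]
    field_simp
    ring
  have hy : (1 - θ) • a + θ • b = a + b - x := by
    simp only [smul_eq_mul, hθ]
    field_simp
    ring
  have h₁ := hf.2 ha hb hθ0 hθ1 (add_sub_cancel θ 1)
  have h₂ := hf.2 ha hb hθ1 hθ0 (sub_add_cancel 1 θ)
  rw [hx] at h₁
  rw [hy] at h₂
  simp only [smul_eq_mul] at h₁ h₂
  linarith

theorem ConvexOn.map_add_sub_map_le (hf : ConvexOn 𝕜 s f) {x y δ : 𝕜} (hx : x ∈ s)
    (hyδ : y + δ ∈ s) (hxy : x ≤ y) (hδ : 0 ≤ δ) :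
    f (x + δ) - f x ≤ f (y + δ) - f y := by
  have key := hf.map_add_map_add_sub_le hx hyδ (x := x + δ) ⟨by linarith, by linarith⟩
  rw [show x + (y + δ) - (x + δ) = y by ring] at key
  linarith

end LinearOrderedField

theorem convexOn_rpow_sub_rpow_sub {p c : ℝ} (hp : 2 ≤ p) (hc : 0 ≤ c) :
    ConvexOn ℝ (Ici c) fun x => x ^ p - (x - c) ^ p := by
  have hp1 : 1 ≤ p := by linarith
  have hderiv : ∀ x : ℝ,
      HasDerivAt (fun x => x ^ p - (x - c) ^ p) (p * x ^ (p - 1) - p * (x - c) ^ (p - 1)) x := by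
    intro x
    have h := ((hasDerivAt_id x).sub_const c).rpow_const (p := p) (Or.inr hp1)
    simp only [id, one_mul] at h
    exact (Real.hasDerivAt_rpow_const (Or.inr hp1)).sub h
  refine MonotoneOn.convexOn_of_deriv (convex_Ici c)
    (fun x _ => (hderiv x).continuousAt.continuousWithinAt)
    (fun x _ => (hderiv x).differentiableAt.differentiableWithinAt) ?_
  intro x hx y _ hxy
  rw [interior_Ici] at hx
  simp only [(hderiv _).deriv]
  have hinc := (convexOn_rpow (p := p - 1) (by linarith)).map_add_sub_map_le
    (x := x - c) (y := y - c) (δ := c) (mem_Ici.mpr (sub_nonneg.mpr hx.le))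
    (by simp only [mem_Ici, sub_add_cancel]; linarith [mem_Ioi.mp hx]) (by linarith) hc
  simp only [sub_add_cancel] at hinc
  simpa only [mul_sub] using mul_le_mul_of_nonneg_left hinc (by linarith : (0 : ℝ) ≤ p)

theorem rpow_max_at_endpoints_general (a d x : ℝ) (ha : 1 ≤ a)
    (hx1 : 1 ≤ x) (hx2 : x ≤ d - 1) :
    x ^ (a + 1) - (x - 1) ^ (a + 1) + (d - x) ^ (a + 1) - (d - x - 1) ^ (a + 1) ≤
      1 + (d - 1) ^ (a + 1) - (d - 2) ^ (a + 1) := by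
  have hconv := convexOn_rpow_sub_rpow_sub (p := a + 1) (c := 1) (by linarith) zero_le_one
  have key := hconv.map_add_map_add_sub_le (a := 1) (b := d - 1) (x := x) self_mem_Ici
    (by simp only [mem_Ici]; linarith) ⟨hx1, hx2⟩
  rw [show 1 + (d - 1) - x = d - x by ring, show d - 1 - 1 = d - 2 by ring, sub_self,
    Real.one_rpow, Real.zero_rpow (by linarith)] at key
  linarith

/-- for reals `a ≥ 1`, `d ≥ 2` and `1 ≤ x ≤ d - 1`,
`x^(a+1) - (x-1)^(a+1) + (d-x)^(a+1) - (d-x-1)^(a+1) ≤ 1 + (d-1)^(a+1) - (d-2)^(a+1)`;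
i.e. the function attains its maximum on `[1, d-1]` at the endpoints. -/
theorem rpow_max_at_endpoints (a d x : ℝ) (ha : 1 ≤ a) (hd : 2 ≤ d)
    (hx1 : 1 ≤ x) (hx2 : x ≤ d - 1) :
    x ^ (a + 1) - (x - 1) ^ (a + 1) + (d - x) ^ (a + 1) - (d - x - 1) ^ (a + 1) ≤
      1 + (d - 1) ^ (a + 1) - (d - 2) ^ (a + 1) :=
  rpow_max_at_endpoints_general a d x ha hx1 hx2
end
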